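/- Let f : ℝⁿ → ℝ be m-strongly convex and C², with ∇²f Lipschitz continuous with constant L₂, let g be proper closed convex, x* the unique minimizer of F = f+g, D = ∇²f(x) (assumed diagonal, i.e., f is separable), and y = prox_g^{D}(x − D⁻¹∇f(x)) where D = ∇²f(x). Then ‖y − x*‖₂ ≤ (L₂/(2m))‖x − x*‖₂². -/

import Mathlib

/-!
Both `y` and `x*` satisfy first-order optimality conditions against the convex `g`: the prox
inequality gives `⟪D (y - x) + ∇f x, y - x*⟫ ≤ g x* - g y`, and minimality of `f + g` gives
`g x* - g y ≤ ⟪∇f x*, y - x*⟫`. Separability makes the Hessian `H = ∇²f x` the diagonal matrix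
`D`, so adding the two inequalities yields
`⟪H (y - x*), y - x*⟫ ≤ ⟪∇f x* - ∇f x - H (x* - x), y - x*⟫`.
Strong convexity bounds the left side below by `m ‖y - x*‖²`, and the Lipschitz Hessian bounds
the Taylor remainder on the right by `L₂ / 2 ‖x - x*‖²`.
-/

open scoped RealInnerProductSpace

/-- Reinterpret a plain vector as an element of Euclidean space. -/
noncomputable def toE {n : ℕ} (v : Fin n → ℝ) : EuclideanSpace ℝ (Fin n) :=
  (WithLp.equiv 2 _).symm v

/-- The squared scaled norm `‖z‖²_H = zᵀHz`. -/
noncomputable def qnorm {n : ℕ} (H : Matrix (Fin n) (Fin n) ℝ)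
    (z : EuclideanSpace ℝ (Fin n)) : ℝ :=
  dotProduct (fun i => z i) (H.mulVec (fun i => z i))

/-- `xp` is a point of the scaled proximal mapping `prox_g^H(u)`, i.e. a minimizer of
`y ↦ g(y) + (1/2)‖y − u‖²_H`. -/
def IsProxPt {n : ℕ} (g : EuclideanSpace ℝ (Fin n) → EReal)
    (H : Matrix (Fin n) (Fin n) ℝ) (u xp : EuclideanSpace ℝ (Fin n)) : Prop :=
  ∀ y, g xp + (((1:ℝ)/2 * qnorm H (xp - u) : ℝ) : EReal)
      ≤ g y + (((1:ℝ)/2 * qnorm H (y - u) : ℝ) : EReal)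

/-- The `i`-th diagonal entry of the Hessian of `f` at `x`. -/
noncomputable def hessDiag {n : ℕ} (f : EuclideanSpace ℝ (Fin n) → ℝ)
    (x : EuclideanSpace ℝ (Fin n)) (i : Fin n) : ℝ :=
  ⟪fderiv ℝ (gradient f) x (EuclideanSpace.single i (1 : ℝ)),
    EuclideanSpace.single i (1 : ℝ)⟫

open Filter Set Topology

theorem HasDerivAt.le_of_forall_le_sub {ψ : ℝ → ℝ} {a c K : ℝ} (hψ : HasDerivAt ψ c 0)
    (h : ∀ t ∈ Ioc (0 : ℝ) 1, a * t - K * t ^ 2 ≤ ψ t - ψ 0) : a ≤ c := by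
  have hlin : Tendsto (fun t : ℝ => a - K * t) (𝓝[>] 0) (𝓝 a) := by
    have hcont : Continuous fun t : ℝ => a - K * t := by fun_prop
    exact (hcont.tendsto' 0 a (by simp)).mono_left nhdsWithin_le_nhds
  refine le_of_tendsto_of_tendsto hlin hψ.tendsto_slope_zero_right ?_
  filter_upwards [Ioc_mem_nhdsGT (zero_lt_one' ℝ)] with t ht
  rw [zero_add, smul_eq_mul, inv_mul_eq_div, le_div_iff₀ ht.1]
  nlinarith [h t ht]

theorem le_div_of_mul_sq_le_mul {r m K : ℝ} (hr : 0 ≤ r) (hm : 0 < m) (hK : 0 ≤ K)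
    (h : m * r ^ 2 ≤ K * r) : r ≤ K / m := by
  rw [le_div_iff₀ hm]
  rcases hr.eq_or_lt with rfl | hr
  · simpa using hK
  · nlinarith

theorem strongConvexOn_univ_of_forall {E : Type*} [NormedAddCommGroup E] [NormedSpace ℝ E]
    {f : E → ℝ} {m : ℝ}
    (h : ∀ (z w : E) (t : ℝ), t ∈ Icc (0 : ℝ) 1 →
      f (t • z + (1 - t) • w) ≤ t * f z + (1 - t) * f w - m / 2 * t * (1 - t) * ‖z - w‖ ^ 2) :
    StrongConvexOn univ m f := by
  refine ⟨convex_univ, fun z _ w _ s t hs ht hst => ?_⟩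
  obtain rfl := eq_sub_of_add_eq' hst
  have := h z w s ⟨hs, by linarith⟩
  simp only [smul_eq_mul]
  linarith

section StrongConvexity

variable {E : Type*} [NormedAddCommGroup E] [InnerProductSpace ℝ E] [CompleteSpace E]
  {f : E → ℝ} {m : ℝ}

theorem StrongConvexOn.inner_gradient_le (hf : StrongConvexOn univ m f) {w : E}
    (hfd : DifferentiableAt ℝ f w) (z : E) :
    ⟪gradient f w, z - w⟫ ≤ f z - f w - m / 2 * ‖z - w‖ ^ 2 := by
  rw [← neg_le_neg_iff, inner_gradient_left]
  refine (hfd.hasFDerivAt.hasLineDerivAt (z - w)).neg.le_of_forall_le_sub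
    (K := m / 2 * ‖z - w‖ ^ 2) fun t ht => ?_
  have h := hf.2 (mem_univ z) (mem_univ w) ht.1.le (sub_nonneg.2 ht.2) (add_sub_cancel t 1)
  rw [show t • z + (1 - t) • w = w + t • (z - w) by module] at h
  simp only [Pi.neg_apply, smul_eq_mul, zero_smul, add_zero] at h ⊢
  nlinarith [h]

theorem StrongConvexOn.mul_sq_le_inner_gradient_sub (hf : StrongConvexOn univ m f)
    (hfd : Differentiable ℝ f) (z w : E) :
    m * ‖z - w‖ ^ 2 ≤ ⟪gradient f z - gradient f w, z - w⟫ := by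
  have h₁ := hf.inner_gradient_le (hfd w) z
  have h₂ := hf.inner_gradient_le (hfd z) w
  rw [← neg_sub z w, inner_neg_right, norm_neg] at h₂
  rw [inner_sub_left]
  linarith

theorem StrongConvexOn.mul_sq_le_inner_fderiv_gradient (hf : StrongConvexOn univ m f)
    (hfd : Differentiable ℝ f) {x : E} (hgd : DifferentiableAt ℝ (gradient f) x) (v : E) :
    m * ‖v‖ ^ 2 ≤ ⟪fderiv ℝ (gradient f) x v, v⟫ := by
  have hline : HasDerivAt (fun t : ℝ => ⟪gradient f (x + t • v), v⟫)
      ⟪fderiv ℝ (gradient f) x v, v⟫ 0 := by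
    simpa using (hgd.hasFDerivAt.hasLineDerivAt v).inner ℝ (hasDerivAt_const 0 v)
  refine hline.le_of_forall_le_sub (K := 0) fun t ht => ?_
  have h := hf.mul_sq_le_inner_gradient_sub hfd (x + t • v) x
  rw [add_sub_cancel_left, inner_smul_right, norm_smul, Real.norm_of_nonneg ht.1.le] at h
  simp only [zero_smul, add_zero, ← inner_sub_left, zero_mul, sub_zero]
  exact le_of_mul_le_mul_left (by linear_combination h) ht.1

end StrongConvexity

theorem norm_image_sub_sub_fderiv_le_of_lipschitz_fderiv {E F : Type*}
    [NormedAddCommGroup E] [NormedSpace ℝ E] [NormedAddCommGroup F] [NormedSpace ℝ F]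
    {G : E → F} {L : ℝ} {x : E} (hG : Differentiable ℝ G)
    (hL : ∀ z v, ‖fderiv ℝ G z v - fderiv ℝ G x v‖ ≤ L * ‖z - x‖ * ‖v‖) (y : E) :
    ‖G y - G x - fderiv ℝ G x (y - x)‖ ≤ L / 2 * ‖y - x‖ ^ 2 := by
  set d := y - x
  set Γ : ℝ → F := fun t => G (x + t • d) - G x - t • fderiv ℝ G x d
  have hΓ : ∀ t : ℝ, HasDerivAt Γ (fderiv ℝ G (x + t • d) d - fderiv ℝ G x d) t := by
    intro t
    have hline : HasDerivAt (fun s : ℝ => x + s • d) d t := by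
      simpa using ((hasDerivAt_id t).smul_const d).const_add x
    have hlin : HasDerivAt (fun s : ℝ => s • fderiv ℝ G x d) (fderiv ℝ G x d) t := by
      simpa using (hasDerivAt_id t).smul_const (fderiv ℝ G x d)
    exact (((hG _).hasFDerivAt.comp_hasDerivAt t hline).sub_const (G x)).sub hlin
  have hB : ∀ t : ℝ, HasDerivAt (fun s : ℝ => L * ‖d‖ ^ 2 * s ^ 2 / 2) (L * ‖d‖ ^ 2 * t) t :=
    fun t => (((hasDerivAt_pow 2 t).const_mul (L * ‖d‖ ^ 2)).div_const 2).congr_deriv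
      (by norm_num; ring)
  have hbound : ∀ t ∈ Ico (0 : ℝ) 1,
      ‖fderiv ℝ G (x + t • d) d - fderiv ℝ G x d‖ ≤ L * ‖d‖ ^ 2 * t := by
    intro t ht
    have h := hL (x + t • d) d
    rwa [add_sub_cancel_left, norm_smul, Real.norm_of_nonneg ht.1,
      show L * (t * ‖d‖) * ‖d‖ = L * ‖d‖ ^ 2 * t by ring] at h
  have h := image_norm_le_of_norm_deriv_right_le_deriv_boundary
    (fun t _ => (hΓ t).continuousAt.continuousWithinAt) (fun t _ => (hΓ t).hasDerivWithinAt)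
    (by simp [Γ]) hB hbound (right_mem_Icc.2 zero_le_one)
  simp only [Γ, one_smul, one_pow, mul_one, d, add_sub_cancel] at h
  linarith

section Separable

variable {ι : Type*} [Fintype ι] [DecidableEq ι] {f : EuclideanSpace ℝ ι → ℝ} {fi : ι → ℝ → ℝ}

theorem gradient_apply_eq_of_separable (hsep : ∀ z, f z = ∑ i, fi i (z i))
    (hf : Differentiable ℝ f) {z w : EuclideanSpace ℝ ι} {i : ι} (h : z i = w i) :
    gradient f z i = gradient f w i := by
  set e : EuclideanSpace ℝ ι := EuclideanSpace.single i 1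
  have hcoord : ∀ p, gradient f p i = fderiv ℝ f p e := fun p => by
    rw [← inner_gradient_left, EuclideanSpace.inner_single_right]
    simp
  have hshift : (fun t : ℝ => f (z + t • e)) = fun t => f (w + t • e) + (f z - f w) := by
    funext t
    rw [hsep, hsep, hsep z, hsep w, ← sub_eq_iff_eq_add', ← Finset.sum_sub_distrib,
      ← Finset.sum_sub_distrib]
    refine Finset.sum_congr rfl fun j _ => ?_
    by_cases hj : j = i
    · subst hj
      simp [h]
    · simp [e, hj]
  have hz : HasDerivAt (fun t : ℝ => f (z + t • e)) (fderiv ℝ f z e) 0 :=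
    (hf z).hasFDerivAt.hasLineDerivAt e
  have hw : HasDerivAt (fun t : ℝ => f (z + t • e)) (fderiv ℝ f w e) 0 := by
    rw [hshift]
    exact ((hf w).hasFDerivAt.hasLineDerivAt e).add_const _
  rw [hcoord, hcoord]
  exact hz.unique hw

end Separable

theorem fderiv_gradient_apply_of_separable {n : ℕ} {f : EuclideanSpace ℝ (Fin n) → ℝ}
    {fi : Fin n → ℝ → ℝ} (hsep : ∀ z, f z = ∑ i, fi i (z i)) (hf : Differentiable ℝ f)
    {x : EuclideanSpace ℝ (Fin n)} (hgd : DifferentiableAt ℝ (gradient f) x)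
    (v : EuclideanSpace ℝ (Fin n)) (i : Fin n) :
    fderiv ℝ (gradient f) x v i = hessDiag f x i * v i := by
  set H := fderiv ℝ (gradient f) x
  have hline : ∀ u, HasDerivAt (fun t : ℝ => gradient f (x + t • u) i) (H u i) 0 := fun u => by
    simpa [Function.comp_def] using
      (EuclideanSpace.proj i).hasFDerivAt.comp_hasDerivAt 0 (hgd.hasFDerivAt.hasLineDerivAt u)
  have hcongr : ∀ u w, u i = w i → H u i = H w i := by
    intro u w huw
    have hsame : (fun t : ℝ => gradient f (x + t • u) i) = fun t => gradient f (x + t • w) i :=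
      funext fun t => gradient_apply_eq_of_separable hsep hf (by simp [huw])
    exact (hline u).unique (hsame ▸ hline w)
  have hdiag : hessDiag f x i = H (EuclideanSpace.single i 1) i := by
    simp [hessDiag, H, EuclideanSpace.inner_single_right]
  rw [hcongr v (v i • EuclideanSpace.single i 1) (by simp), map_smul, hdiag]
  simp [mul_comm]

/-- `ConvexOn` does not apply here: its codomain must be an ordered module, and `EReal` is not. -/
def ConvexEReal {E : Type*} [AddCommGroup E] [Module ℝ E] (g : E → EReal) : Prop :=
  ∀ (z w : E) (a b : ℝ), 0 ≤ a → 0 ≤ b → a + b = 1 →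
    g (a • z + b • w) ≤ (a : EReal) * g z + (b : EReal) * g w

section Optimality

variable {E : Type*} {φ : E → ℝ} {g : E → EReal} {p : E}

theorem exists_eq_coe_of_isMinOn_add (hmin : IsMinOn (fun w => (φ w : EReal) + g w) univ p)
    (hg : ∃ z, g z ≠ ⊤) (hbot : g p ≠ ⊥) : ∃ a : ℝ, g p = a := by
  obtain ⟨z, hz⟩ := hg
  refine ⟨(g p).toReal, (EReal.coe_toReal (fun hp => ?_) hbot).symm⟩
  have h := hmin (mem_univ z)
  simp only [hp, EReal.coe_add_top, top_le_iff] at h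
  exact (EReal.add_ne_top_iff_ne_top_right (EReal.coe_ne_bot _) (EReal.coe_ne_top _)).2 hz h

variable [AddCommGroup E] [Module ℝ E]

theorem sub_le_of_isMinOn_add_of_hasLineDerivAt (hg : ConvexEReal g)
    (hmin : IsMinOn (fun w => (φ w : EReal) + g w) univ p) {z : E} {a b c : ℝ}
    (hp : g p = a) (hz : g z = b) (hφ : HasLineDerivAt ℝ φ c p (z - p)) : a - b ≤ c := by
  refine HasDerivAt.le_of_forall_le_sub (K := 0) hφ fun t ht => ?_
  set w := p + t • (z - p)
  have hgw : g w ≤ ((t * b + (1 - t) * a : ℝ) : EReal) := by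
    have h := hg z p t (1 - t) ht.1.le (sub_nonneg.2 ht.2) (add_sub_cancel t 1)
    rwa [show t • z + (1 - t) • p = w by module, hp, hz, ← EReal.coe_mul, ← EReal.coe_mul,
      ← EReal.coe_add] at h
  have hle : ((φ p + a : ℝ) : EReal) ≤ ((φ w + (t * b + (1 - t) * a) : ℝ) : EReal) :=
    calc ((φ p + a : ℝ) : EReal) = (φ p : EReal) + g p := by rw [hp, EReal.coe_add]
      _ ≤ φ w + g w := hmin (mem_univ w)
      _ ≤ φ w + ((t * b + (1 - t) * a : ℝ) : EReal) := add_le_add_right hgw _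
      _ = ((φ w + (t * b + (1 - t) * a) : ℝ) : EReal) := (EReal.coe_add _ _).symm
  have := EReal.coe_le_coe_iff.1 hle
  simp only [zero_smul, add_zero]
  nlinarith

end Optimality

section Prox

variable {n : ℕ} {g : EuclideanSpace ℝ (Fin n) → EReal} {d : Fin n → ℝ}

theorem qnorm_diagonal (d : Fin n → ℝ) (z : EuclideanSpace ℝ (Fin n)) :
    qnorm (Matrix.diagonal d) z = ∑ i, d i * z i * z i := by
  simp only [qnorm, dotProduct, Matrix.mulVec_diagonal]
  exact Finset.sum_congr rfl fun i _ => by ring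

theorem hasLineDerivAt_qnorm_diagonal (d : Fin n → ℝ) (u p v : EuclideanSpace ℝ (Fin n)) :
    HasLineDerivAt ℝ (fun w => 1 / 2 * qnorm (Matrix.diagonal d) (w - u))
      (∑ i, d i * (p i - u i) * v i) p v := by
  have hterm : ∀ i, HasDerivAt (fun t : ℝ => d i * (p i + t * v i - u i) * (p i + t * v i - u i))
      (2 * (d i * (p i - u i) * v i)) 0 := fun i => by
    have hl : HasDerivAt (fun t : ℝ => p i + t * v i - u i) (v i) 0 := by
      simpa using ((hasDerivAt_id (0 : ℝ)).mul_const (v i)).const_add (p i) |>.sub_const (u i)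
    exact ((hl.const_mul (d i)).mul hl).congr_deriv (by simp; ring)
  unfold HasLineDerivAt
  simp only [qnorm_diagonal, PiLp.sub_apply, PiLp.add_apply, PiLp.smul_apply, smul_eq_mul]
  refine ((HasDerivAt.fun_sum fun i _ => hterm i).const_mul (1 / 2)).congr_deriv ?_
  rw [← Finset.mul_sum]
  ring

theorem IsProxPt.isMinOn {D : Matrix (Fin n) (Fin n) ℝ} {u y : EuclideanSpace ℝ (Fin n)}
    (hy : IsProxPt g D u y) :
    IsMinOn (fun w => ((1 / 2 * qnorm D (w - u) : ℝ) : EReal) + g w) univ y :=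
  isMinOn_univ_iff.2 fun w => by simpa only [add_comm] using hy w

theorem IsProxPt.sum_le {u y z : EuclideanSpace ℝ (Fin n)} {a b : ℝ} (hg : ConvexEReal g)
    (hy : IsProxPt g (Matrix.diagonal d) u y) (hgy : g y = a) (hgz : g z = b) :
    ∑ i, d i * (y i - u i) * (y i - z i) ≤ b - a := by
  have h := sub_le_of_isMinOn_add_of_hasLineDerivAt hg hy.isMinOn hgy hgz
    (hasLineDerivAt_qnorm_diagonal d u y (z - y))
  have hneg : ∑ i, d i * (y i - u i) * (y i - z i) = -∑ i, d i * (y i - u i) * (z - y) i := by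
    rw [← Finset.sum_neg_distrib]
    exact Finset.sum_congr rfl fun i _ => by simp; ring
  linarith

theorem IsProxPt.inner_newton_le (hd : ∀ i, d i ≠ 0)
    {H : EuclideanSpace ℝ (Fin n) →L[ℝ] EuclideanSpace ℝ (Fin n)} (hH : ∀ v i, H v i = d i * v i)
    {x G y z : EuclideanSpace ℝ (Fin n)} {a b : ℝ} (hg : ConvexEReal g)
    (hy : IsProxPt g (Matrix.diagonal d) (x - toE ((Matrix.diagonal d)⁻¹.mulVec fun i => G i)) y)
    (hgy : g y = a) (hgz : g z = b) :
    ⟪H (y - x) + G, y - z⟫ ≤ b - a := by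
  refine le_of_eq_of_le ?_ (hy.sum_le hg hgy hgz)
  have hDinv : (Matrix.diagonal d)⁻¹ = Matrix.diagonal d⁻¹ := Matrix.inv_eq_right_inv <| by
    rw [Matrix.diagonal_mul_diagonal, ← Matrix.diagonal_one]
    exact congrArg _ (funext fun i => mul_inv_cancel₀ (hd i))
  simp only [PiLp.inner_apply, hDinv]
  refine Finset.sum_congr rfl fun i _ => ?_
  have := hd i
  simp [hH, toE, Matrix.mulVec_diagonal]
  field_simp
  ring

end Prox

theorem norm_sub_le_div_of_inner_le {E : Type*} [NormedAddCommGroup E] [InnerProductSpace ℝ E]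
    {H : E →L[ℝ] E} {m K : ℝ} {x y xs G Gs : E} (hm : 0 < m)
    (hH : m * ‖y - xs‖ ^ 2 ≤ ⟪H (y - xs), y - xs⟫)
    (hopt : ⟪H (y - x) + G, y - xs⟫ ≤ ⟪Gs, y - xs⟫) (hK : ‖Gs - G - H (xs - x)‖ ≤ K) :
    ‖y - xs‖ ≤ K / m := by
  refine le_div_of_mul_sq_le_mul (norm_nonneg _) hm ((norm_nonneg _).trans hK) ?_
  calc m * ‖y - xs‖ ^ 2 ≤ ⟪H (y - xs), y - xs⟫ := hH
    _ ≤ ⟪Gs - G - H (xs - x), y - xs⟫ := by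
      rw [show y - x = (y - xs) + (xs - x) by abel, map_add, inner_add_left,
        inner_add_left] at hopt
      rw [inner_sub_left, inner_sub_left]
      linarith
    _ ≤ ‖Gs - G - H (xs - x)‖ * ‖y - xs‖ := real_inner_le_norm _ _
    _ ≤ K * ‖y - xs‖ := by gcongr

theorem stmt12_general {n : ℕ} (f : EuclideanSpace ℝ (Fin n) → ℝ)
    (fi : Fin n → ℝ → ℝ)
    (g : EuclideanSpace ℝ (Fin n) → EReal)
    (m L₂ : ℝ) (x y xstar : EuclideanSpace ℝ (Fin n))
    (hf : ContDiff ℝ 2 f)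
    (hsep : ∀ z : EuclideanSpace ℝ (Fin n), f z = ∑ i, fi i (z i))
    (hm : 0 < m)
    (hsc : ∀ (z w : EuclideanSpace ℝ (Fin n)) (lam : ℝ), lam ∈ Set.Icc (0:ℝ) 1 →
      f (lam • z + (1 - lam) • w) ≤
        lam * f z + (1 - lam) * f w - m / 2 * lam * (1 - lam) * ‖z - w‖ ^ 2)
    (hhess : ∀ (z w v : EuclideanSpace ℝ (Fin n)),
      ‖fderiv ℝ (gradient f) z v - fderiv ℝ (gradient f) w v‖ ≤ L₂ * ‖z - w‖ * ‖v‖)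
    (hg_proper : ∃ z, g z ≠ ⊤) (hg_nebot : ∀ z, g z ≠ ⊥)
    (hg_convex : ∀ (z w : EuclideanSpace ℝ (Fin n)) (a b : ℝ), 0 ≤ a → 0 ≤ b →
      a + b = 1 → g (a • z + b • w) ≤ (a : EReal) * g z + (b : EReal) * g w)
    (hopt : ∀ z, (f xstar : EReal) + g xstar ≤ (f z : EReal) + g z)
    (hy : IsProxPt g (Matrix.diagonal (hessDiag f x))
      (x - toE ((Matrix.diagonal (hessDiag f x))⁻¹.mulVec
        fun i => gradient f x i)) y) :
    ‖y - xstar‖ ≤ L₂ / (2 * m) * ‖x - xstar‖ ^ 2 := by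
  have hfd : Differentiable ℝ f := hf.differentiable two_ne_zero
  have hgd : Differentiable ℝ (gradient f) :=
    ((InnerProductSpace.toDual ℝ _).symm.contDiff.comp (hf.fderiv_right le_rfl)).differentiable
      one_ne_zero
  have hH := (strongConvexOn_univ_of_forall hsc).mul_sq_le_inner_fderiv_gradient hfd (hgd x)
  have hdiag := fderiv_gradient_apply_of_separable hsep hfd (hgd x)
  have hd : ∀ i, hessDiag f x i ≠ 0 := fun i =>
    (hm.trans_le (by simpa [hessDiag] using hH (EuclideanSpace.single i 1))).ne'
  have hmin : IsMinOn (fun w => (f w : EReal) + g w) univ xstar := isMinOn_univ_iff.2 hopt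
  obtain ⟨a, ha⟩ := exists_eq_coe_of_isMinOn_add hy.isMinOn hg_proper (hg_nebot y)
  obtain ⟨b, hb⟩ := exists_eq_coe_of_isMinOn_add hmin hg_proper (hg_nebot xstar)
  have hprox := hy.inner_newton_le hd hdiag hg_convex ha hb
  have hstat : b - a ≤ ⟪gradient f xstar, y - xstar⟫ := by
    rw [inner_gradient_left]
    exact sub_le_of_isMinOn_add_of_hasLineDerivAt hg_convex hmin hb ha
      ((hfd xstar).hasFDerivAt.hasLineDerivAt _)
  have htaylor :=
    norm_image_sub_sub_fderiv_le_of_lipschitz_fderiv hgd (fun z v => hhess z x v) xstar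
  calc ‖y - xstar‖ ≤ L₂ / 2 * ‖xstar - x‖ ^ 2 / m :=
        norm_sub_le_div_of_inner_le hm (hH _) (by linarith) htaylor
    _ = L₂ / (2 * m) * ‖x - xstar‖ ^ 2 := by rw [norm_sub_rev]; ring

/-- for separable, `m`-strongly convex C² `f` with `L₂`-Lipschitz Hessian
and convex `g`, the full proximal Newton step `y = prox_g^{D}(x − D⁻¹∇f(x))`,
`D = ∇²f(x)` (diagonal by separability), satisfies `‖y−x*‖ ≤ (L₂/(2m))‖x−x*‖²`. -/
theorem stmt12 {n : ℕ} (f : EuclideanSpace ℝ (Fin n) → ℝ)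
    (fi : Fin n → ℝ → ℝ)
    (g : EuclideanSpace ℝ (Fin n) → EReal)
    (m L₂ : ℝ) (x y xstar : EuclideanSpace ℝ (Fin n))
    (hf : ContDiff ℝ 2 f)
    (hsep : ∀ z : EuclideanSpace ℝ (Fin n), f z = ∑ i, fi i (z i))
    (hm : 0 < m)
    (hsc : ∀ (z w : EuclideanSpace ℝ (Fin n)) (lam : ℝ), lam ∈ Set.Icc (0:ℝ) 1 →
      f (lam • z + (1 - lam) • w) ≤
        lam * f z + (1 - lam) * f w - m / 2 * lam * (1 - lam) * ‖z - w‖ ^ 2)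
    (hhess : ∀ (z w v : EuclideanSpace ℝ (Fin n)),
      ‖fderiv ℝ (gradient f) z v - fderiv ℝ (gradient f) w v‖ ≤ L₂ * ‖z - w‖ * ‖v‖)
    (hg_proper : ∃ z, g z ≠ ⊤) (hg_nebot : ∀ z, g z ≠ ⊥)
    (hg_closed : LowerSemicontinuous g)
    (hg_convex : ∀ (z w : EuclideanSpace ℝ (Fin n)) (a b : ℝ), 0 ≤ a → 0 ≤ b →
      a + b = 1 → g (a • z + b • w) ≤ (a : EReal) * g z + (b : EReal) * g w)
    (hopt : ∀ z, (f xstar : EReal) + g xstar ≤ (f z : EReal) + g z)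
    (huniq : ∀ z : EuclideanSpace ℝ (Fin n),
      (∀ w, (f z : EReal) + g z ≤ (f w : EReal) + g w) → z = xstar)
    (hy : IsProxPt g (Matrix.diagonal (hessDiag f x))
      (x - toE ((Matrix.diagonal (hessDiag f x))⁻¹.mulVec
        fun i => gradient f x i)) y) :
    ‖y - xstar‖ ≤ L₂ / (2 * m) * ‖x - xstar‖ ^ 2 :=
  stmt12_general f fi g m L₂ x y xstar hf hsep hm hsc hhess hg_proper hg_nebot hg_convex hopt hy
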